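/- arXiv:1406.0444 — 6 statements merged into one kernel-verified Lean document; each statement's English description precedes it below -/
import Mathlib

section
/- Let n ≥ 1 and let λ^L, λ^R be partitions; form the bipartition λ = (λ^L, λ^R) and take δ = 0. Then the weight diagram of λ has no vertex labelled × and no vertex labelled ∘ — that is, I_∧(λ) ∩ I_∨(λ) = ∅ and I_∧(λ) ∪ I_∨(λ) = ℤ (the condition that the associated mixed tensor R(λ^L, λ^R) of Gl(n|n) is maximally atypical) — if and only if λ^R = (λ^L)*. -/
/-- A partition, encoded 0-indexed: `f i` is the part `λ_{i+1}`.  It is weakly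
decreasing and eventually zero. -/
structure PartitionFn where
  f : ℕ → ℕ
  antitone' : ∀ i j : ℕ, i ≤ j → f j ≤ f i
  ev_zero : ∃ N : ℕ, ∀ i : ℕ, N ≤ i → f i = 0

/-- The conjugate partition (0-indexed): `conjFn f j = λ*_{j+1} = #{i ≥ 1 : λ_i ≥ j+1}`. -/
noncomputable def conjFn (f : ℕ → ℕ) (j : ℕ) : ℕ := Set.ncard {i : ℕ | j + 1 ≤ f i}

/-- The length `l(λ) = #{i : λ_i > 0}` of a partition. -/
noncomputable def plen (f : ℕ → ℕ) : ℕ := Set.ncard {i : ℕ | 0 < f i}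

/-- `I_∧(λ) = {λ^L_i − i + 1 : i ≥ 1}` (0-indexed: `{λ^L_{i+1} − i : i ≥ 0}`). -/
def Iwedge (fL : ℕ → ℕ) : Set ℤ := {x : ℤ | ∃ i : ℕ, x = (fL i : ℤ) - (i : ℤ)}

/-- `I_∨(λ) = {i − δ − λ^R_i : i ≥ 1}` (0-indexed: `{(i+1) − δ − λ^R_{i+1} : i ≥ 0}`). -/
def Ivee (δ : ℤ) (fR : ℕ → ℕ) : Set ℤ :=
  {x : ℤ | ∃ i : ℕ, x = (i : ℤ) + 1 - δ - (fR i : ℤ)}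

/-- Vertex `x` is labelled `∨` in the weight diagram of the bipartition `(fL, fR)`. -/
def VeeLabel (δ : ℤ) (fL fR : ℕ → ℕ) (x : ℤ) : Prop :=
  x ∈ Ivee δ fR ∧ x ∉ Iwedge fL

/-- Vertex `x` is labelled `∧` in the weight diagram of the bipartition `(fL, fR)`. -/
def WedgeLabel (δ : ℤ) (fL fR : ℕ → ℕ) (x : ℤ) : Prop :=
  x ∈ Iwedge fL ∧ x ∉ Ivee δ fR

/-- A finite family of pairwise disjoint pairs `(v, w)` with `v < w`, `v` labelled `∨`
and `w` labelled `∧` in the weight diagram of the bipartition `(fL, fR)` relative to `δ`. -/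
def CapFamily (δ : ℤ) (fL fR : ℕ → ℕ) (S : Finset (ℤ × ℤ)) : Prop :=
  (∀ p ∈ S, p.1 < p.2 ∧ VeeLabel δ fL fR p.1 ∧ WedgeLabel δ fL fR p.2) ∧
  ∀ p ∈ S, ∀ q ∈ S, p ≠ q →
    p.1 ≠ q.1 ∧ p.1 ≠ q.2 ∧ p.2 ≠ q.1 ∧ p.2 ≠ q.2

/-- The defect of the bipartition `(fL, fR)` relative to `δ` equals `n`:
`n` is the maximal cardinality of a `CapFamily`. -/
def DefectEq (δ : ℤ) (fL fR : ℕ → ℕ) (n : ℕ) : Prop :=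
  (∃ S : Finset (ℤ × ℤ), CapFamily δ fL fR S ∧ S.card = n) ∧
  ∀ S : Finset (ℤ × ℤ), CapFamily δ fL fR S → S.card ≤ n

/-- The bipartition `(fL, fR)` is `(m|n)`-cross:
`∃ 1 ≤ i ≤ m+1` with `λ^L_i + λ^R_{m+2−i} ≤ n` (0-indexed below). -/
def IsCross (m n : ℕ) (fL fR : ℕ → ℕ) : Prop :=
  ∃ i : ℕ, i ≤ m ∧ fL i + fR (m - i) ≤ n

/-!
For any partition `λ` the sets `{λ_i - i + 1}` and `{j - λ*_j}` (`i, j ≥ 1`) partition `ℤ`: walking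
along the boundary of the Young diagram of `λ`, every unit step is vertical or horizontal, and the
two sets record where these steps occur. Hence the weight diagram of `(λ^L, λ^R)` has neither `×`
nor `∘` exactly when `I_∨(λ^R)` is the complement of `I_∧(λ^L)`, that is `I_∨(λ^R) = I_∨((λ^L)*)`;
and since `j ↦ j - μ_j` is strictly increasing for every partition `μ`, the set `I_∨(μ)`
determines `μ`.
-/

namespace PartitionFn

variable (p : PartitionFn)

lemma setOf_succ_le_eq_Iio (j : ℕ) : {i | j + 1 ≤ p.f i} = Set.Iio (conjFn p.f j) := by
  have hex : ∃ m, p.f m ≤ j := by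
    obtain ⟨N, hN⟩ := p.ev_zero
    exact ⟨N, by simp [hN N le_rfl]⟩
  have hIio : {i | j + 1 ≤ p.f i} = Set.Iio (Nat.find hex) := by
    ext i
    simp only [Set.mem_ofPred_eq, Set.mem_Iio]
    constructor
    · intro hi
      by_contra! hle
      have := p.antitone' _ _ hle
      have := Nat.find_spec hex
      omega
    · intro hi
      have := Nat.find_min hex hi
      omega
  have hcard : conjFn p.f j = Nat.find hex := by
    rw [conjFn, hIio, ← Finset.coe_Iio, Set.ncard_coe_finset, Nat.card_Iio]
  rw [hIio, hcard]

lemma lt_conjFn_iff {i j : ℕ} : i < conjFn p.f j ↔ j + 1 ≤ p.f i := by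
  rw [← Set.mem_Iio, ← setOf_succ_le_eq_Iio]
  rfl

lemma conjFn_antitone : Antitone (conjFn p.f) := fun j j' hjj' => by
  rw [← Set.Iio_subset_Iio_iff, ← setOf_succ_le_eq_Iio, ← setOf_succ_le_eq_Iio]
  exact fun i (hi : j' + 1 ≤ p.f i) => (by omega : j + 1 ≤ p.f i)

lemma disjoint_Iwedge_Ivee_conjFn : Disjoint (Iwedge p.f) (Ivee 0 (conjFn p.f)) := by
  rw [Set.disjoint_left]
  rintro x ⟨i, rfl⟩ ⟨j, hj⟩
  have := p.lt_conjFn_iff (i := i) (j := j)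
  omega

/-- With `i` least such that `p.f i - i ≤ x`, either `x = p.f i - i`, or
`p.f i - i < x < p.f (i - 1) - (i - 1)` and then `x = j + 1 - conjFn p.f j` for `j = x + i - 1`. -/
lemma codisjoint_Iwedge_Ivee_conjFn : Codisjoint (Iwedge p.f) (Ivee 0 (conjFn p.f)) := by
  rw [codisjoint_iff_le_sup]
  intro x _
  by_cases hx : x ∈ Iwedge p.f
  · exact Or.inl hx
  refine Or.inr ?_
  have hex : ∃ i : ℕ, (p.f i : ℤ) ≤ x + i := by
    obtain ⟨N, hN⟩ := p.ev_zero
    exact ⟨N + x.natAbs, by rw [hN _ (Nat.le_add_right _ _)]; omega⟩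
  set i := Nat.find hex
  have hi : (p.f i : ℤ) < x + i :=
    lt_of_le_of_ne (Nat.find_spec hex) fun h => hx ⟨i, by omega⟩
  obtain ⟨j, hj⟩ : ∃ j : ℕ, (j : ℤ) = x + i - 1 := ⟨(x + i - 1).toNat, by omega⟩
  have hconj : conjFn p.f j = i := by
    have hle : ¬ i < conjFn p.f j := by rw [p.lt_conjFn_iff]; omega
    rcases Nat.eq_zero_or_pos i with h0 | hpos
    · omega
    · have hprev : ¬ (p.f (i - 1) : ℤ) ≤ x + (i - 1 : ℕ) := Nat.find_min hex (by omega)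
      have := (p.lt_conjFn_iff (i := i - 1) (j := j)).mpr (by omega)
      omega
  exact ⟨j, by rw [hconj]; omega⟩

theorem isCompl_Iwedge_Ivee_conjFn : IsCompl (Iwedge p.f) (Ivee 0 (conjFn p.f)) :=
  ⟨p.disjoint_Iwedge_Ivee_conjFn, p.codisjoint_Iwedge_Ivee_conjFn⟩

end PartitionFn

lemma Ivee_eq_range (δ : ℤ) (q : ℕ → ℕ) :
    Ivee δ q = Set.range fun i : ℕ => (i : ℤ) + 1 - δ - q i := by
  ext x
  simp only [Ivee, Set.mem_ofPred_eq, Set.mem_range, eq_comm]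

lemma strictMono_Ivee_seq {q : ℕ → ℕ} (hq : Antitone q) (δ : ℤ) :
    StrictMono fun i : ℕ => (i : ℤ) + 1 - δ - q i :=
  strictMono_nat_of_lt_succ fun i => by
    have := hq (Nat.le_add_right i 1)
    push_cast
    omega

lemma eq_of_Ivee_eq {δ : ℤ} {q q' : ℕ → ℕ} (hq : Antitone q) (hq' : Antitone q')
    (h : Ivee δ q = Ivee δ q') : q = q' := by
  rw [Ivee_eq_range, Ivee_eq_range,
    (strictMono_Ivee_seq hq δ).range_inj (strictMono_Ivee_seq hq' δ)] at h
  funext i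
  have := congrFun h i
  omega

theorem stmt0_general (lamL lamR : PartitionFn) :
    (Iwedge lamL.f ∩ Ivee 0 lamR.f = ∅ ∧ Iwedge lamL.f ∪ Ivee 0 lamR.f = Set.univ)
      ↔ lamR.f = conjFn lamL.f := by
  have hcompl : IsCompl (Iwedge lamL.f) (Ivee 0 lamR.f) ↔
      (Iwedge lamL.f ∩ Ivee 0 lamR.f = ∅ ∧ Iwedge lamL.f ∪ Ivee 0 lamR.f = Set.univ) := by
    rw [isCompl_iff, Set.disjoint_iff_inter_eq_empty, codisjoint_iff]
    rfl
  rw [← hcompl]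
  constructor
  · intro h
    exact eq_of_Ivee_eq (fun _ _ hij => lamR.antitone' _ _ hij) lamL.conjFn_antitone
      (h.right_unique lamL.isCompl_Iwedge_Ivee_conjFn)
  · intro h
    rw [h]
    exact lamL.isCompl_Iwedge_Ivee_conjFn

/-- for `δ = 0`, the weight diagram of the bipartition `(λ^L, λ^R)` has no
`×` and no `∘` (i.e. `I_∧ ∩ I_∨ = ∅` and `I_∧ ∪ I_∨ = ℤ`) iff `λ^R = (λ^L)*`. -/
theorem stmt0 (n : ℕ) (hn : 1 ≤ n) (lamL lamR : PartitionFn) :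
    (Iwedge lamL.f ∩ Ivee 0 lamR.f = ∅ ∧ Iwedge lamL.f ∪ Ivee 0 lamR.f = Set.univ)
      ↔ lamR.f = conjFn lamL.f :=
  stmt0_general lamL lamR
end

section
/- Let n ≥ 1 and let (λ^L, λ^R) be a bipartition that is (n|n)-cross. Then the bipartition ((λ^R)*, (λ^L)*) is also (n|n)-cross. (This shows that the involution I sending R(λ^L, λ^R) to R((λ^R)*, (λ^L)*) is well defined on mixed tensors of Gl(n|n).) -/
lemma conjFn_le_of_le {f : ℕ → ℕ} (hf : Antitone f) {j k : ℕ} (h : f k ≤ j) :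
    conjFn f j ≤ k := by
  have hsub : {i : ℕ | j + 1 ≤ f i} ⊆ Set.Iio k := fun i (hi : j + 1 ≤ f i) =>
    lt_of_not_ge fun hki => by have : f i ≤ f k := hf hki; omega
  calc conjFn f j ≤ (Set.Iio k).ncard := Set.ncard_le_ncard hsub (Set.finite_Iio k)
    _ = k := Set.ncard_Iio_nat k

theorem stmt1_general (n : ℕ) (lamL lamR : PartitionFn)
    (h : IsCross n n lamL.f lamR.f) :
    IsCross n n (conjFn lamR.f) (conjFn lamL.f) := by
  obtain ⟨i, hi, hsum⟩ := h
  -- The row index `i` of the crossing becomes the column index `λ^R_{n-i}` of the conjugates.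
  refine ⟨lamR.f (n - i), by omega, ?_⟩
  have hR : conjFn lamR.f (lamR.f (n - i)) ≤ n - i :=
    conjFn_le_of_le (fun a b => lamR.antitone' a b) le_rfl
  have hL : conjFn lamL.f (n - lamR.f (n - i)) ≤ i :=
    conjFn_le_of_le (fun a b => lamL.antitone' a b) (by omega)
  omega

/-- if `(λ^L, λ^R)` is `(n|n)`-cross then so is `((λ^R)*, (λ^L)*)`. -/
theorem stmt1 (n : ℕ) (hn : 1 ≤ n) (lamL lamR : PartitionFn)
    (h : IsCross n n lamL.f lamR.f) :
    IsCross n n (conjFn lamR.f) (conjFn lamL.f) :=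
  stmt1_general n lamL lamR h
end

section
/- Let δ ≥ 0 be an integer and let λ = (λ^L, λ^R) be a bipartition of length l(λ^L) + l(λ^R) ≤ δ. Then the defect of λ relative to δ is zero; equivalently, in the weight diagram of λ relative to δ there is no pair of integers v < w with v labelled ∨ and w labelled ∧. (In particular the maximally atypical mixed tensors R(λ) of Gl(m|n) with nonvanishing superdimension, i.e. those with l(λ) ≤ m − n, are irreducible.) -/
/-!
Every integer `x ≤ -l(λ^L)` lies in `I_∧`, since `λ^L_{1-x} = 0`, and every integer
`x > l(λ^R) - δ` lies in `I_∨`, since `λ^R_{x+δ} = 0`. Hence a `∨` sits to the right of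
`-l(λ^L)` and an `∧` at or left of `l(λ^R) - δ`; a `∨` left of an `∧` would force
`δ < l(λ^L) + l(λ^R)`.
-/

namespace PartitionFn

theorem f_eq_zero_of_plen_le (p : PartitionFn) {i : ℕ} (hi : plen p.f ≤ i) : p.f i = 0 := by
  by_contra hne
  obtain ⟨N, hN⟩ := p.ev_zero
  have hfin : {j : ℕ | 0 < p.f j}.Finite :=
    (Set.finite_Iio N).subset fun j hj => not_le.mp fun hjN => hj.ne' (hN j hjN)
  have hsub : Set.Iic i ⊆ {j : ℕ | 0 < p.f j} := fun j hj =>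
    (Nat.pos_of_ne_zero hne).trans_le (p.antitone' j i hj)
  have hcard := Set.ncard_le_ncard hsub hfin
  rw [← Finset.coe_Iic, Set.ncard_coe_finset, Nat.card_Iic] at hcard
  exact absurd (hcard.trans hi) (Nat.not_succ_le_self i)

theorem mem_Iwedge_of_le_neg_plen (p : PartitionFn) {x : ℤ} (hx : x ≤ -(plen p.f : ℤ)) :
    x ∈ Iwedge p.f := by
  obtain ⟨i, hi⟩ := Int.eq_ofNat_of_zero_le (show 0 ≤ -x by omega)
  exact ⟨i, by rw [p.f_eq_zero_of_plen_le (by omega)]; omega⟩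

theorem mem_Ivee_of_plen_sub_lt (p : PartitionFn) {δ x : ℤ} (hx : (plen p.f : ℤ) - δ < x) :
    x ∈ Ivee δ p.f := by
  obtain ⟨i, hi⟩ := Int.eq_ofNat_of_zero_le (show 0 ≤ x + δ - 1 by omega)
  exact ⟨i, by rw [p.f_eq_zero_of_plen_le (by omega)]; omega⟩

end PartitionFn

/-- if `δ ≥ 0` and `l(λ^L) + l(λ^R) ≤ δ` then the defect of `(λ^L, λ^R)`
relative to `δ` is zero: there is no pair `v < w` with `v` labelled `∨` and `w` labelled `∧`. -/
theorem stmt3 (δ : ℕ) (lamL lamR : PartitionFn)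
    (h : plen lamL.f + plen lamR.f ≤ δ) :
    ¬ ∃ v w : ℤ, v < w ∧ VeeLabel (δ : ℤ) lamL.f lamR.f v ∧
      WedgeLabel (δ : ℤ) lamL.f lamR.f w := by
  rintro ⟨v, w, hvw, ⟨-, hv⟩, ⟨-, hw⟩⟩
  have hv' : -(plen lamL.f : ℤ) < v := by
    by_contra! hle
    exact hv (lamL.mem_Iwedge_of_le_neg_plen hle)
  have hw' : w ≤ (plen lamR.f : ℤ) - δ := by
    by_contra! hlt
    exact hw (lamR.mem_Ivee_of_plen_sub_lt hlt)
  omega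
end

section
/- Let k ≥ 0 and let λ be a partition with l(λ) ≤ k. Then the defect of the bipartition (λ, λ*) relative to δ = 0 satisfies d((λ, λ*)) ≤ k. -/
/-!
Every `∨` of the weight diagram of `(λ, λ*)` is at least `1 - l(λ)`, because the parts of `λ*`
are at most `l(λ)`. The right end of a cap therefore lies above `1 - l(λ)`, whereas the `∧`s
`λ_i - i + 1` with `i > l(λ)` are `≤ -l(λ)`. So each cap ends at one of the `l(λ)` values
`λ_i - i + 1`, `i ≤ l(λ)`, and distinct caps end at distinct points.
-/

namespace PartitionFn

variable (lam : PartitionFn)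

theorem finite_setOf_pos : {i : ℕ | 0 < lam.f i}.Finite := by
  obtain ⟨N, hN⟩ := lam.ev_zero
  refine (Set.finite_Iio N).subset fun i hi => ?_
  by_contra hiN
  have := hN i (not_lt.mp hiN)
  simp_all

theorem eq_zero_of_plen_le {i : ℕ} (hi : plen lam.f ≤ i) : lam.f i = 0 := by
  by_contra hne
  have hsub : (Finset.Iic i : Set ℕ) ⊆ {j : ℕ | 0 < lam.f j} := fun j hj => by
    have := lam.antitone' j i (Finset.mem_Iic.mp hj)
    show 0 < lam.f j
    omega
  have hcard := Set.ncard_le_ncard hsub lam.finite_setOf_pos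
  rw [Set.ncard_coe_finset, Nat.card_Iic] at hcard
  exact absurd hi (by unfold plen; omega)

theorem conjFn_le_plen (m : ℕ) : conjFn lam.f m ≤ plen lam.f :=
  Set.ncard_le_ncard (fun j (hj : m + 1 ≤ lam.f j) => show 0 < lam.f j by omega)
    lam.finite_setOf_pos

theorem le_of_mem_Ivee_conjFn {δ x : ℤ} (hx : x ∈ Ivee δ (conjFn lam.f)) :
    1 - δ - plen lam.f ≤ x := by
  obtain ⟨m, rfl⟩ := hx
  have := lam.conjFn_le_plen m
  omega

theorem exists_lt_plen_of_mem_Iwedge {x : ℤ} (hx : x ∈ Iwedge lam.f)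
    (hlt : -(plen lam.f : ℤ) < x) : ∃ i < plen lam.f, x = lam.f i - i := by
  obtain ⟨i, rfl⟩ := hx
  refine ⟨i, ?_, rfl⟩
  by_contra hi
  rw [lam.eq_zero_of_plen_le (not_lt.mp hi)] at hlt
  omega

end PartitionFn

theorem CapFamily.injOn_snd {δ : ℤ} {fL fR : ℕ → ℕ} {S : Finset (ℤ × ℤ)}
    (hS : CapFamily δ fL fR S) : Set.InjOn Prod.snd (S : Set (ℤ × ℤ)) := fun p hp q hq hpq =>
  by_contra fun hne => (hS.2 p hp q hq hne).2.2.2 hpq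

theorem capFamily_conjFn_card_le_plen (lam : PartitionFn) {S : Finset (ℤ × ℤ)}
    (hS : CapFamily 0 lam.f (conjFn lam.f) S) : S.card ≤ plen lam.f := by
  have hends : S.image Prod.snd ⊆
      (Finset.range (plen lam.f)).image fun i => (lam.f i : ℤ) - i := by
    simp only [Finset.subset_iff, Finset.mem_image, Finset.mem_range]
    rintro _ ⟨p, hp, rfl⟩
    obtain ⟨hlt, ⟨hv, -⟩, ⟨hw, -⟩⟩ := hS.1 p hp
    have := lam.le_of_mem_Ivee_conjFn hv
    obtain ⟨i, hi, heq⟩ := lam.exists_lt_plen_of_mem_Iwedge hw (by omega)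
    exact ⟨i, hi, heq.symm⟩
  calc S.card = (S.image Prod.snd).card := (Finset.card_image_of_injOn hS.injOn_snd).symm
    _ ≤ ((Finset.range (plen lam.f)).image fun i => (lam.f i : ℤ) - i).card :=
        Finset.card_le_card hends
    _ ≤ plen lam.f := Finset.card_image_le.trans (Finset.card_range _).le

/-- if `l(λ) ≤ k` then `d((λ, λ*)) ≤ k` relative to `δ = 0`. -/
theorem stmt4 (k : ℕ) (lam : PartitionFn) (h : plen lam.f ≤ k)
    (S : Finset (ℤ × ℤ)) (hS : CapFamily 0 lam.f (conjFn lam.f) S) :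
    S.card ≤ k :=
  (capFamily_conjFn_card_le_plen lam hS).trans h
end

section
/- Let k ≥ 0 and let λ be a partition with λ_1 ≤ k. Then the defect of the bipartition (λ, λ*) relative to δ = 0 satisfies d((λ, λ*)) ≤ k. -/
/- The `∨`-labels come from the indices `i` via `i + 1 - δ - λ*_i`, and `λ*_i = 0` once `i ≥ λ_1`;
those labels then lie to the right of every `∧`-label (all of which are `≤ λ_1`), so they cannot
start a cap. Hence the left endpoints of the caps, which are pairwise distinct, come from the
`λ_1` indices `i < λ_1`. -/

section Bounded

variable {f : ℕ → ℕ} {b : ℕ}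

lemma conjFn_eq_zero_of_le (hf : ∀ i, f i ≤ b) {j : ℕ} (hj : b ≤ j) : conjFn f j = 0 := by
  have hempty : {i : ℕ | j + 1 ≤ f i} = ∅ :=
    Set.eq_empty_of_forall_notMem fun i hi => by
      have hi : j + 1 ≤ f i := hi
      have := hf i
      omega
  rw [conjFn, hempty, Set.ncard_empty]

lemma le_of_mem_Iwedge (hf : ∀ i, f i ≤ b) {x : ℤ} (hx : x ∈ Iwedge f) : x ≤ b := by
  obtain ⟨i, rfl⟩ := hx
  have := hf i
  omega

lemma exists_lt_of_mem_Ivee_conjFn (hf : ∀ i, f i ≤ b) {δ x : ℤ} (hx : x ∈ Ivee δ (conjFn f))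
    (hxb : x < b + 1 - δ) : ∃ i < b, x = (i : ℤ) + 1 - δ - conjFn f i := by
  obtain ⟨i, rfl⟩ := hx
  refine ⟨i, ?_, rfl⟩
  by_contra! hbi
  rw [conjFn_eq_zero_of_le hf hbi] at hxb
  omega

end Bounded

lemma CapFamily.injOn_fst {δ : ℤ} {fL fR : ℕ → ℕ} {S : Finset (ℤ × ℤ)}
    (hS : CapFamily δ fL fR S) : Set.InjOn Prod.fst (S : Set (ℤ × ℤ)) := fun p hp q hq hpq => by
  by_contra hne
  exact (hS.2 p hp q hq hne).1 hpq

lemma CapFamily.card_le_of_le {f : ℕ → ℕ} {b : ℕ} (hf : ∀ i, f i ≤ b) {δ : ℤ} (hδ : δ ≤ 1)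
    {S : Finset (ℤ × ℤ)} (hS : CapFamily δ f (conjFn f) S) : S.card ≤ b := by
  have hfst : S.image Prod.fst ⊆
      (Finset.range b).image fun i : ℕ => (i : ℤ) + 1 - δ - conjFn f i := by
    intro v hv
    obtain ⟨p, hp, rfl⟩ := Finset.mem_image.mp hv
    obtain ⟨hlt, hvee, hwedge⟩ := hS.1 p hp
    have hw := le_of_mem_Iwedge hf hwedge.1
    obtain ⟨i, hib, hi⟩ := exists_lt_of_mem_Ivee_conjFn hf hvee.1 (by omega)
    exact Finset.mem_image.mpr ⟨i, Finset.mem_range.mpr hib, hi.symm⟩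
  calc S.card = (S.image Prod.fst).card := (Finset.card_image_of_injOn hS.injOn_fst).symm
    _ ≤ ((Finset.range b).image fun i : ℕ => (i : ℤ) + 1 - δ - conjFn f i).card :=
        Finset.card_le_card hfst
    _ ≤ b := Finset.card_image_le.trans (Finset.card_range b).le

/-- if `λ_1 ≤ k` then `d((λ, λ*)) ≤ k` relative to `δ = 0`. -/
theorem stmt5 (k : ℕ) (lam : PartitionFn) (h : lam.f 0 ≤ k)
    (S : Finset (ℤ × ℤ)) (hS : CapFamily 0 lam.f (conjFn lam.f) S) :
    S.card ≤ k :=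
  (hS.card_le_of_le (fun i => lam.antitone' 0 i i.zero_le) zero_le_one).trans h
end

section
/- Let λ be a nonzero partition such that the bipartition (λ, λ*) has defect 1 relative to δ = 0. Then there exists a ≥ 1 such that λ = (a) (a single row: λ_1 = a and λ_i = 0 for i ≥ 2) or λ = (1^a) (a single column: λ_i = 1 for 1 ≤ i ≤ a and λ_i = 0 for i > a). (In representation-theoretic terms: every mixed tensor of Gl(n|n) in the maximally atypical block of defect 1 is one of the modules 𝔸_{S^i} or 𝔸_{Λ^i}.) -/
/-!
For `δ = 0` and `λ^R = λ*`, the sets `I_∧` and `I_∨` are disjoint (they are the two halves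
of the Maya diagram of `λ`), so every vertex of `I_∨` is labelled `∨` and every vertex of
`I_∧` is labelled `∧`. If `λ₁ ≥ 2` and `λ₂ ≥ 1`, the vertices `1 - λ*₁, 2 - λ*₂ ∈ I_∨` and
`λ₂ - 1, λ₁ ∈ I_∧` then form two disjoint caps, so the defect is at least `2`.
Hence `λ₂ = 0` (a row) or `λ₁ = 1` (a column).
-/

namespace PartitionFn

variable (lam : PartitionFn)

theorem le_f_iff_lt_conjFn (c i : ℕ) : c + 1 ≤ lam.f i ↔ i < conjFn lam.f c := by
  obtain ⟨N, hN⟩ := lam.ev_zero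
  have hex : ∃ j, lam.f j ≤ c := ⟨N, by simp [hN N le_rfl]⟩
  have hset : {j : ℕ | c + 1 ≤ lam.f j} = Set.Iio (Nat.find hex) := by
    ext j
    change c + 1 ≤ lam.f j ↔ j < Nat.find hex
    constructor
    · intro hj
      by_contra! hjk
      have := lam.antitone' _ j hjk
      have := Nat.find_spec hex
      omega
    · intro hj
      have := Nat.find_min hex hj
      omega
  rw [conjFn, hset, ← Finset.coe_range, Set.ncard_coe_finset, Finset.card_range]
  exact Set.ext_iff.mp hset i

theorem one_le_f_zero (hne : lam.f ≠ fun _ => 0) : 1 ≤ lam.f 0 := by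
  by_contra! h0
  refine hne (funext fun i => ?_)
  have := lam.antitone' 0 i i.zero_le
  omega

theorem eq_row (h1 : lam.f 1 = 0) : lam.f = fun i => if i = 0 then lam.f 0 else 0 := by
  funext i
  rcases Nat.eq_zero_or_pos i with rfl | hi
  · simp
  · have := lam.antitone' 1 i hi
    simp only [if_neg hi.ne']
    omega

theorem eq_column (h0 : lam.f 0 = 1) :
    lam.f = fun i => if i < conjFn lam.f 0 then 1 else 0 := by
  funext i
  have hi := lam.le_f_iff_lt_conjFn 0 i
  have := lam.antitone' 0 i i.zero_le
  split_ifs <;> omega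

theorem disjoint_iwedge_ivee_conjFn : Disjoint (Iwedge lam.f) (Ivee 0 (conjFn lam.f)) := by
  refine Set.disjoint_left.2 ?_
  rintro _ ⟨i, rfl⟩ ⟨j, hj⟩
  have := lam.le_f_iff_lt_conjFn j i
  by_cases j + 1 ≤ lam.f i <;> omega

theorem veeLabel_of_mem {x : ℤ} (hx : x ∈ Ivee 0 (conjFn lam.f)) :
    VeeLabel 0 lam.f (conjFn lam.f) x :=
  ⟨hx, lam.disjoint_iwedge_ivee_conjFn.notMem_of_mem_right hx⟩

theorem wedgeLabel_of_mem {x : ℤ} (hx : x ∈ Iwedge lam.f) :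
    WedgeLabel 0 lam.f (conjFn lam.f) x :=
  ⟨hx, lam.disjoint_iwedge_ivee_conjFn.notMem_of_mem_left hx⟩

end PartitionFn

theorem capFamily_pair {δ : ℤ} {fL fR : ℕ → ℕ} {v₁ w₁ v₂ w₂ : ℤ}
    (h₁ : v₁ < w₁) (h₂ : v₂ < w₂) (hv : v₁ ≠ v₂) (hw : w₁ ≠ w₂)
    (hv₁ : VeeLabel δ fL fR v₁) (hv₂ : VeeLabel δ fL fR v₂)
    (hw₁ : WedgeLabel δ fL fR w₁) (hw₂ : WedgeLabel δ fL fR w₂) :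
    CapFamily δ fL fR {(v₁, w₁), (v₂, w₂)} := by
  have hvw : ∀ {v w}, VeeLabel δ fL fR v → WedgeLabel δ fL fR w → v ≠ w :=
    fun hv hw hvw => hv.2 (hvw ▸ hw.1)
  refine ⟨?_, ?_⟩
  · simp only [Finset.mem_insert, Finset.mem_singleton]
    rintro _ (rfl | rfl)
    exacts [⟨h₁, hv₁, hw₁⟩, ⟨h₂, hv₂, hw₂⟩]
  · simp only [Finset.mem_insert, Finset.mem_singleton]
    rintro _ (rfl | rfl) _ (rfl | rfl) hpq <;> first
      | exact absurd rfl hpq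
      | exact ⟨hv, hvw hv₁ hw₂, (hvw hv₂ hw₁).symm, hw⟩
      | exact ⟨hv.symm, hvw hv₂ hw₁, (hvw hv₁ hw₂).symm, hw.symm⟩

theorem PartitionFn.exists_capFamily_card_two (lam : PartitionFn)
    (h0 : 2 ≤ lam.f 0) (h1 : 1 ≤ lam.f 1) :
    ∃ S, CapFamily 0 lam.f (conjFn lam.f) S ∧ S.card = 2 := by
  have hl := (lam.le_f_iff_lt_conjFn 0 1).1 h1
  have hm := (lam.le_f_iff_lt_conjFn 1 0).1 h0
  have hml : conjFn lam.f 1 ≤ conjFn lam.f 0 :=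
    Set.ncard_le_ncard (fun i (hi : 2 ≤ lam.f i) => show 1 ≤ lam.f i by omega)
      (Set.finite_Iio _ |>.subset fun i hi => (lam.le_f_iff_lt_conjFn 0 i).1 hi)
  have hv₁ : (1 - conjFn lam.f 0 : ℤ) ∈ Ivee 0 (conjFn lam.f) := ⟨0, by simp⟩
  have hv₂ : (2 - conjFn lam.f 1 : ℤ) ∈ Ivee 0 (conjFn lam.f) := ⟨1, by ring⟩
  have hw₁ : (lam.f 1 - 1 : ℤ) ∈ Iwedge lam.f := ⟨1, by simp⟩
  have hw₂ : (lam.f 0 : ℤ) ∈ Iwedge lam.f := ⟨0, by simp⟩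
  have hba := lam.antitone' 0 1 zero_le_one
  refine ⟨_, capFamily_pair (by omega) (by omega) (by omega) (by omega)
    (lam.veeLabel_of_mem hv₁) (lam.veeLabel_of_mem hv₂)
    (lam.wedgeLabel_of_mem hw₁) (lam.wedgeLabel_of_mem hw₂), ?_⟩
  exact Finset.card_pair (by simp only [ne_eq, Prod.mk.injEq, not_and]; omega)

/-- a nonzero partition `λ` with `d((λ, λ*)) = 1` relative to `δ = 0` is a
single row `(a)` or a single column `(1^a)` for some `a ≥ 1`. -/
theorem stmt8 (lam : PartitionFn) (hne : lam.f ≠ fun _ => 0)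
    (h : DefectEq 0 lam.f (conjFn lam.f) 1) :
    ∃ a : ℕ, 1 ≤ a ∧
      ((lam.f = fun i => if i = 0 then a else 0) ∨
       (lam.f = fun i => if i < a then 1 else 0)) := by
  have h0 := lam.one_le_f_zero hne
  by_cases hrow : lam.f 1 = 0
  · exact ⟨lam.f 0, h0, Or.inl (lam.eq_row hrow)⟩
  by_cases hcol : lam.f 0 = 1
  · exact ⟨conjFn lam.f 0, (lam.le_f_iff_lt_conjFn 0 0).1 h0, Or.inr (lam.eq_column hcol)⟩
  obtain ⟨S, hS, hcard⟩ := lam.exists_capFamily_card_two (by omega) (by omega)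
  have := h.2 S hS
  omega
end
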